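/- arXiv:2209.14146 — 3 statements merged into one kernel-verified Lean document; each statement's English description precedes it below -/
import Mathlib

section
/- Let P be an irreducible reversible Markov chain on finite state space V with stationary distribution π, let M ⊆ V be nonempty, and consider the halting process of the previous setting with expected numbers of departures E[N_u^→] from each state u. Define the flow θ(u,v) = E[u→v] - E[v→u] where E[u→v] = Σ_t Pr[X_t = u, τ > t]·P_{u,v}. Then Σ_{(u,v)∈E⃗} θ(u,v)²/(π(u)P_{u,v}) ≤ Σ_{u∈V} E[N_u^→] = E[τ]. -/
open Finset

/-- **Energy of the departure flow is bounded by the expected halting time.**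
Let `P` be a stochastic matrix on a finite set `V`, reversible with respect to
a positive probability distribution `π`, let `M ⊆ V` be a nonempty marked
set checked with probability `δ ∈ (0,1]`, and let `N u ≥ 0` be the expected
numbers of departures `E[N_u^→]` of the halting process started from `π`,
satisfying the balance equations
`N u = π u + ∑ v, P v u · N v` for `u ∉ M` and
`N u = (1-δ)·(π u + ∑ v, P v u · N v)` for `u ∈ M`.
Define the flow `θ(u,v) = N u · P u v - N v · P v u`.  Then
`∑_{(u,v)} θ(u,v)² / (π u · P u v) ≤ ∑ u, N u (= E[τ])`, where the sum over
one orientation of each edge is written as half the sum over ordered pairs. -/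
theorem departure_flow_energy_le {V : Type*} [Fintype V] [DecidableEq V]
    (P : V → V → ℝ) (pi : V → ℝ) (M : Finset V) (δ : ℝ) (N : V → ℝ)
    (hstoch : ∀ u, (∀ v, 0 ≤ P u v) ∧ ∑ v, P u v = 1)
    (hpipos : ∀ u, 0 < pi u) (hpisum : ∑ u, pi u = 1)
    (hrev : ∀ u v, pi u * P u v = pi v * P v u)
    (hM : M.Nonempty) (hδ : 0 < δ) (hδ1 : δ ≤ 1)
    (hN : ∀ u, 0 ≤ N u)
    (hbal : ∀ u ∉ M, N u = pi u + ∑ v, P v u * N v)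
    (hbalM : ∀ u ∈ M, N u = (1 - δ) * (pi u + ∑ v, P v u * N v)) :
    (1 / 2 : ℝ) * ∑ u, ∑ v, (N u * P u v - N v * P v u) ^ 2 / (pi u * P u v)
      ≤ ∑ u, N u := by
  set f : V → ℝ := fun u => N u / pi u with hf
  have hpine : ∀ u, pi u ≠ 0 := fun u => (hpipos u).ne'
  have hfN : ∀ u, pi u * f u = N u := by
    intro u; rw [hf, mul_comm]; exact div_mul_cancel₀ (N u) (hpine u)
  -- term rewrite
  have hterm : ∀ u v, (N u * P u v - N v * P v u) ^ 2 / (pi u * P u v)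
      = pi u * P u v * (f u - f v) ^ 2 := by
    intro u v
    by_cases h : P u v = 0
    · have h2 : P v u = 0 := by
        have := hrev u v
        rw [h, mul_zero] at this
        exact (mul_eq_zero.mp this.symm).resolve_left (hpine v)
      simp [h, h2]
    · have hne : pi u * P u v ≠ 0 := mul_ne_zero (hpine u) h
      have hθ : N u * P u v - N v * P v u = pi u * P u v * (f u - f v) := by
        have h1 : N u * P u v = pi u * P u v * f u := by
          rw [← hfN u]; ring
        have h2 : N v * P v u = pi u * P u v * f v := by
          rw [hrev u v, ← hfN v]; ring
        rw [h1, h2]; ring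
      rw [hθ]
      field_simp
  have hsum : ∀ u, ∑ v, (N u * P u v - N v * P v u) ^ 2 / (pi u * P u v)
      = ∑ v, pi u * P u v * (f u - f v) ^ 2 := fun u =>
    Finset.sum_congr rfl (fun v _ => hterm u v)
  simp only [hsum]
  set S : V → ℝ := fun u => ∑ v, P v u * N v with hS
  have hA : ∑ u, ∑ v : V, pi u * P u v * f u ^ 2 = ∑ u, f u * N u := by
    refine Finset.sum_congr rfl (fun u _ => ?_)
    have : ∑ v, pi u * P u v * f u ^ 2 = (pi u * f u ^ 2) * ∑ v, P u v := by
      rw [Finset.mul_sum]; exact Finset.sum_congr rfl (fun v _ => by ring)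
    rw [this, (hstoch u).2, mul_one, ← hfN u]; ring
  have hC : ∑ u, ∑ v : V, pi u * P u v * f v ^ 2 = ∑ u, f u * N u := by
    have h1 : ∀ u v, pi u * P u v * f v ^ 2 = pi v * P v u * f v ^ 2 := by
      intro u v; rw [hrev u v]
    rw [show (∑ u, ∑ v : V, pi u * P u v * f v ^ 2)
        = ∑ u, ∑ v : V, pi v * P v u * f v ^ 2 from
      Finset.sum_congr rfl fun u _ => Finset.sum_congr rfl fun v _ => h1 u v]
    rw [Finset.sum_comm]
    refine Finset.sum_congr rfl (fun v _ => ?_)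
    have : ∑ u, pi v * P v u * f v ^ 2 = (pi v * f v ^ 2) * ∑ u, P v u := by
      rw [Finset.mul_sum]; exact Finset.sum_congr rfl (fun u _ => by ring)
    rw [this, (hstoch v).2, mul_one, ← hfN v]; ring
  have hB : ∑ u, ∑ v, pi u * P u v * f u * f v = ∑ u, f u * S u := by
    refine Finset.sum_congr rfl (fun u _ => ?_)
    have h1 : ∀ v, pi u * P u v * f u * f v = f u * (P v u * N v) := by
      intro v
      have : pi u * P u v * f v = P v u * N v := by
        rw [hrev u v, ← hfN v]; ring
      calc pi u * P u v * f u * f v = f u * (pi u * P u v * f v) := by ring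
        _ = f u * (P v u * N v) := by rw [this]
    simp only [h1]
    rw [← Finset.mul_sum]
  -- Dirichlet identity
  have hdir : (1 / 2 : ℝ) * ∑ u, ∑ v, pi u * P u v * (f u - f v) ^ 2
      = ∑ u, f u * (N u - S u) := by
    have hexp : ∀ u : V, ∑ v, pi u * P u v * (f u - f v) ^ 2
        = (∑ v, pi u * P u v * f u ^ 2)
          - 2 * ∑ v, pi u * P u v * f u * f v
          + ∑ v, pi u * P u v * f v ^ 2 := by
      intro u
      rw [Finset.mul_sum, ← Finset.sum_sub_distrib, ← Finset.sum_add_distrib]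
      exact Finset.sum_congr rfl (fun v _ => by ring)
    simp only [hexp]
    rw [Finset.sum_add_distrib, Finset.sum_sub_distrib, hA, hC,
      ← Finset.mul_sum, hB]
    have : ∑ u, f u * (N u - S u) = ∑ u, f u * N u - ∑ u, f u * S u := by
      rw [← Finset.sum_sub_distrib]
      exact Finset.sum_congr rfl fun u _ => by ring
    rw [this]; ring
  rw [hdir]
  -- termwise bound
  refine Finset.sum_le_sum (fun u _ => ?_)
  have hfpos : 0 ≤ f u := div_nonneg (hN u) (hpipos u).le
  have hSpos : 0 ≤ S u :=
    Finset.sum_nonneg (fun v _ => mul_nonneg ((hstoch v).1 u) (hN v))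
  by_cases hu : u ∈ M
  · have hb := hbalM u hu
    have h1 : N u - S u ≤ pi u := by
      have : N u - S u = (1 - δ) * pi u - δ * S u := by rw [hb]; ring
      nlinarith [(hpipos u).le]
    calc f u * (N u - S u) ≤ f u * pi u := by
          exact mul_le_mul_of_nonneg_left h1 hfpos
      _ = N u := by rw [← hfN u]; ring
  · have hb := hbal u hu
    have h1 : N u - S u = pi u := by rw [hb]; ring
    rw [h1]
    calc f u * pi u = N u := by rw [← hfN u]; ring
      _ ≤ N u := le_refl _
end

section
/- Let G be a finite weighted graph with weights w, let θ be a circulation on G, and for each vertex u define the 'star state' ψ_⋆(u) = Σ_{i∈L⁺(u)} √(w_{u,i})·e_{(→,u,i)} − Σ_{j∈L⁻(u)} √(w_{u,j})·e_{(←,u,j)} in the space with orthonormal basis {e_{(d,u,i)}}, and the 'witness vector' w = Σ_{u, i∈L⁺(u)} (θ(u,i)/√(w_{u,i}))·(e_{(→,u,i)} + e_{(←,v,j)}) where (v,j) is the other endpoint-label pair of the edge (u,i). Then ⟨ψ_⋆(u), w⟩ = Σ_{i∈L(u)} θ(u,i) = 0 for every vertex u. -/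
open Finset
open scoped RealInnerProductSpace

noncomputable section

/-- The star state of vertex `u`: outgoing labels with head `true` (→) and
positive sign, incoming labels with head `false` (←) and negative sign, with
amplitudes `√(w_{u,i})`. -/
def starState {V Lbl : Type*} [Fintype V] [Fintype Lbl] [DecidableEq V] [DecidableEq Lbl]
    (ww : V → Lbl → ℝ) (Lplus Lminus : V → Finset Lbl) (u : V) :
    EuclideanSpace ℝ (Bool × V × Lbl) :=
  (∑ i ∈ Lplus u, Real.sqrt (ww u i) • EuclideanSpace.single (true, u, i) (1 : ℝ))
    - ∑ j ∈ Lminus u, Real.sqrt (ww u j) • EuclideanSpace.single (false, u, j) (1 : ℝ)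

/-- The witness vector built from a circulation `θ`: for every vertex `u` and
outgoing label `i ∈ L⁺(u)` with other endpoint `v = f u i` and label
`j = g u i`, add `(θ(u,i)/√(w_{u,i})) (e_{(→,u,i)} + e_{(←,v,j)})`. -/
def witnessVec {V Lbl : Type*} [Fintype V] [Fintype Lbl] [DecidableEq V] [DecidableEq Lbl]
    (ww : V → Lbl → ℝ) (Lplus : V → Finset Lbl) (θ : V → Lbl → ℝ)
    (f : V → Lbl → V) (g : V → Lbl → Lbl) :
    EuclideanSpace ℝ (Bool × V × Lbl) :=
  ∑ u, ∑ i ∈ Lplus u, (θ u i / Real.sqrt (ww u i)) •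
    (EuclideanSpace.single (true, u, i) (1 : ℝ)
      + EuclideanSpace.single (false, f u i, g u i) (1 : ℝ))

/-- **The positive witness is orthogonal to all star states.** For a
circulation `θ` on a finite weighted graph presented with edge labels
(`f u i` the other endpoint of the edge labelled `i` at `u`, `g u i` its
label there, with the involution and weight-consistency conditions), the
witness vector `w = ∑_{u, i∈L⁺(u)} (θ(u,i)/√w_{u,i})(e_{(→,u,i)} + e_{(←,v,j)})`
satisfies `⟪ψ⋆(u), w⟫ = ∑_{i∈L(u)} θ(u,i) = 0` for every vertex `u`. -/
theorem starState_inner_witnessVec_eq_zero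
    {V Lbl : Type*} [Fintype V] [Fintype Lbl] [DecidableEq V] [DecidableEq Lbl]
    (ww : V → Lbl → ℝ) (Lplus Lminus : V → Finset Lbl)
    (θ : V → Lbl → ℝ) (f : V → Lbl → V) (g : V → Lbl → Lbl)
    (hdisj : ∀ u, Disjoint (Lplus u) (Lminus u))
    (hpos : ∀ u, ∀ i ∈ Lplus u ∪ Lminus u, 0 < ww u i)
    (hinv₁ : ∀ u, ∀ i ∈ Lplus u,
      g u i ∈ Lminus (f u i) ∧ f (f u i) (g u i) = u ∧ g (f u i) (g u i) = i)
    (hinv₂ : ∀ u, ∀ j ∈ Lminus u,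
      g u j ∈ Lplus (f u j) ∧ f (f u j) (g u j) = u ∧ g (f u j) (g u j) = j)
    (hwsym : ∀ u, ∀ i ∈ Lplus u, ww (f u i) (g u i) = ww u i)
    (hθanti : ∀ u, ∀ i ∈ Lplus u, θ (f u i) (g u i) = - θ u i)
    (hcirc : ∀ u, (∑ i ∈ Lplus u, θ u i) + (∑ j ∈ Lminus u, θ u j) = 0)
    (u : V) :
    ⟪starState ww Lplus Lminus u, witnessVec ww Lplus θ f g⟫ = 0 := by
  classical
  have hA : ∀ i ∈ Lplus u,
      ⟪EuclideanSpace.single (true, u, i) (1 : ℝ), witnessVec ww Lplus θ f g⟫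
        = θ u i / Real.sqrt (ww u i) := by
    intro i hi
    unfold witnessVec
    rw [inner_sum]
    simp only [inner_sum, inner_add_right, real_inner_smul_right,
      EuclideanSpace.inner_single_left, EuclideanSpace.single_apply, map_one, one_mul,
      Prod.mk.injEq, starRingEnd_apply, star_one]
    rw [Finset.sum_eq_single u]
    · rw [Finset.sum_eq_single i]
      · simp
      · intro b _ hb
        simp [hb.symm]
      · intro h; exact absurd hi h
    · intro v _ hvu
      refine Finset.sum_eq_zero fun i' _ => ?_
      simp
      intro h _
      exact (hvu h.symm).elim
    · simp
  have hB : ∀ j ∈ Lminus u,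
      ⟪EuclideanSpace.single (false, u, j) (1 : ℝ), witnessVec ww Lplus θ f g⟫
        = - θ u j / Real.sqrt (ww u j) := by
    intro j hj
    obtain ⟨hmem, hf, hg⟩ := hinv₂ u j hj
    unfold witnessVec
    rw [inner_sum]
    simp only [inner_sum, inner_add_right, real_inner_smul_right,
      EuclideanSpace.inner_single_left, EuclideanSpace.single_apply, map_one, one_mul,
      Prod.mk.injEq, starRingEnd_apply, star_one]
    rw [Finset.sum_eq_single (f u j)]
    · rw [Finset.sum_eq_single (g u j)]
      · have hθ : θ (f u j) (g u j) = - θ u j := by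
          have := hθanti (f u j) (g u j) hmem
          rw [hf, hg] at this
          linarith
        have hw : ww (f u j) (g u j) = ww u j := by
          have := hwsym (f u j) (g u j) hmem
          rw [hf, hg] at this
          exact this.symm
        simp [hf, hg, hθ, hw]
      · intro i' hi' hne
        have hcon : ¬ (u = f (f u j) i' ∧ j = g (f u j) i') := by
          rintro ⟨h1, h2⟩
          obtain ⟨_, hf', hg'⟩ := hinv₁ (f u j) i' hi'
          rw [← h1, ← h2] at hg'
          exact hne hg'.symm
        simp [hcon]
      · intro h; exact absurd hmem h
    · intro v _ hvu
      refine Finset.sum_eq_zero fun i' hi' => ?_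
      have hcon : ¬ (u = f v i' ∧ j = g v i') := by
        rintro ⟨h1, h2⟩
        obtain ⟨_, hf', hg'⟩ := hinv₁ v i' hi'
        rw [← h1, ← h2] at hf'
        exact hvu hf'.symm
      simp [hcon]
    · simp
  rw [starState, inner_sub_left, sum_inner, sum_inner]
  simp only [real_inner_smul_left]
  have h1 : ∑ i ∈ Lplus u, Real.sqrt (ww u i) *
        ⟪EuclideanSpace.single (true, u, i) (1 : ℝ), witnessVec ww Lplus θ f g⟫
      = ∑ i ∈ Lplus u, θ u i := by
    refine Finset.sum_congr rfl fun i hi => ?_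
    have hs : Real.sqrt (ww u i) ≠ 0 :=
      ne_of_gt (Real.sqrt_pos.2 (hpos u i (Finset.mem_union_left _ hi)))
    rw [hA i hi]
    field_simp
  have h2 : ∑ j ∈ Lminus u, Real.sqrt (ww u j) *
        ⟪EuclideanSpace.single (false, u, j) (1 : ℝ), witnessVec ww Lplus θ f g⟫
      = ∑ j ∈ Lminus u, - θ u j := by
    refine Finset.sum_congr rfl fun j hj => ?_
    have hs : Real.sqrt (ww u j) ≠ 0 :=
      ne_of_gt (Real.sqrt_pos.2 (hpos u j (Finset.mem_union_right _ hj)))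
    rw [hB j hj]
    field_simp
  rw [h1, h2]
  have := hcirc u
  simp only [Finset.sum_neg_distrib, sub_neg_eq_add]
  linarith

end
end

section
/- Consider a variable-time quantum algorithm on H_A ⊗ H_Z with stopping-time decomposition H_Z = H̄_1 ⊕ ... ⊕ H̄_T, unitaries U_t, stopping time T_i and output projector Ξ_{g(i)} onto the correct answer g(i). Define the negative history state w_-(i) = (e_→ ⊗ |i⟩ - e_← ⊗ A|i⟩) ⊗ Σ_{t=0}^{T} √(α_t)·(-1)^t·w^t(i) ⊗ |t⟩ with α_0 = 1. Then the squared distance from w_-(i) to the even-time transition space span(Ψ_0) is at most 2·Σ_{t even} α_t·p̄_i(t)·ε_i^t ≤ 2·E[α_{T_i}·ε_i^{T_i}], where p̄_i(t) is the probability of halting at time t and ε_i^t the conditional error probability at time t. -/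
open Finset

noncomputable section

/-- The subroutine register space: answer register `A` times workspace `Z`. -/
abbrev Wsp (A Z : Type*) [Fintype A] [Fintype Z] := EuclideanSpace ℂ (A × Z)

/-- Embed a subroutine-register vector `x` into the full space (direction
head `d ∈ {→ = 0, ← = 1}`, answer/workspace, time register), at time `t`. -/
def emb {A Z : Type*} [Fintype A] [Fintype Z] [DecidableEq A] [DecidableEq Z]
    (T : ℕ) (d : Fin 2) (t : ℕ) (x : Wsp A Z) :
    EuclideanSpace ℂ (Fin 2 × A × Z × Fin (T + 1)) :=
  WithLp.toLp 2 fun p => if p.1 = d ∧ (p.2.2.2 : ℕ) = t then x (p.2.1, p.2.2.1) else 0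

/-- The orthogonal projection `Π_{≤t}` onto `H_t`, the span of basis states
with workspace layer `≤ t`. -/
def layerProj {A Z : Type*} [Fintype A] [Fintype Z]
    (layer : Z → ℕ) (t : ℕ) (x : Wsp A Z) : Wsp A Z :=
  WithLp.toLp 2 fun az => if layer az.2 ≤ t then x az else 0

/-- The orthogonal projection `Π_t` onto `H̄_t = H_t ∩ H_{t-1}^⊥`, the span of
basis states with workspace layer exactly `t`. -/
def layerSlice {A Z : Type*} [Fintype A] [Fintype Z]
    (layer : Z → ℕ) (t : ℕ) (x : Wsp A Z) : Wsp A Z :=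
  WithLp.toLp 2 fun az => if layer az.2 = t then x az else 0

/-- The projection `I - Ξ_g` onto the answers different from the correct
answer `g`. -/
def badPart {A Z : Type*} [Fintype A] [Fintype Z] [DecidableEq A]
    (g : A) (x : Wsp A Z) : Wsp A Z :=
  WithLp.toLp 2 fun az => if az.1 = g then 0 else x az

/-- The even-time transition states `Ψ_0` of the subroutine: forward states
(head `→`), backward states (head `←`), and reversal states
`√α_t (e_→ - c_a e_←) ⊗ |a,z⟩|t⟩` (where `A_a|i⟩ = c_a · A|i⟩`). -/
def Psi0Set {A Z : Type*} [Fintype A] [Fintype Z] [DecidableEq A] [DecidableEq Z]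
    (T : ℕ) (layer : Z → ℕ) (α : ℕ → ℝ)
    (U : ℕ → Wsp A Z →L[ℂ] Wsp A Z) (c : A → ℂ) :
    Set (EuclideanSpace ℂ (Fin 2 × A × Z × Fin (T + 1))) :=
  {ψ | ∃ t a z, Even t ∧ t < T ∧ t < layer z ∧
      ψ = emb T 0 t ((Real.sqrt (α t) : ℂ) • EuclideanSpace.single (a, z) (1 : ℂ))
            - emb T 0 (t + 1)
                ((Real.sqrt (α (t + 1)) : ℂ) • U (t + 1) (EuclideanSpace.single (a, z) (1 : ℂ)))}
  ∪ {ψ | ∃ t a z, Even t ∧ t < T ∧ t < layer z ∧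
      ψ = emb T 1 t ((Real.sqrt (α t) : ℂ) • EuclideanSpace.single (a, z) (1 : ℂ))
            - emb T 1 (t + 1)
                ((Real.sqrt (α (t + 1)) : ℂ) • U (t + 1) (EuclideanSpace.single (a, z) (1 : ℂ)))}
  ∪ {ψ | ∃ t a z, Even t ∧ 1 ≤ t ∧ t ≤ T ∧ layer z = t ∧
      ψ = (Real.sqrt (α t) : ℂ) •
            (emb T 0 t (EuclideanSpace.single (a, z) (1 : ℂ))
              - c a • emb T 1 t (EuclideanSpace.single (a, z) (1 : ℂ)))}

/-- The negative history state
`w₋ = (e_→ - e_←) ⊗ ∑_{t=0}^{T} √α_t (-1)^t w^t ⊗ |t⟩`. -/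
def negHistory {A Z : Type*} [Fintype A] [Fintype Z] [DecidableEq A] [DecidableEq Z]
    (T : ℕ) (α : ℕ → ℝ) (w : ℕ → Wsp A Z) :
    EuclideanSpace ℂ (Fin 2 × A × Z × Fin (T + 1)) :=
  ∑ s ∈ Finset.range (T + 1),
    ((Real.sqrt (α s) : ℂ) * (-1) ^ s) • (emb T 0 s (w s) - emb T 1 s (w s))

section Aux

lemma euclid_sum_apply {ι κ : Type*} [Fintype ι] (s : Finset κ) (f : κ → EuclideanSpace ℂ ι) (i : ι) :
    (∑ k ∈ s, f k) i = ∑ k ∈ s, f k i := by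
  classical
  induction s using Finset.induction_on with
  | empty => rfl
  | insert _ _ h ih => rw [Finset.sum_insert h, Finset.sum_insert h, PiLp.add_apply, ih]

lemma euclid_norm_sq {ι : Type*} [Fintype ι] (x : EuclideanSpace ℂ ι) :
    ‖x‖ ^ 2 = ∑ i, ‖x i‖ ^ 2 := by
  rw [EuclideanSpace.norm_eq, Real.sq_sqrt (by positivity)]

lemma sum_range_odd_pair {M : Type*} [AddCommMonoid M] (T : ℕ) (hT : Odd T) (F : ℕ → M) :
    ∑ s ∈ Finset.range (T + 1), F s
      = ∑ t ∈ (Finset.range T).filter (fun t => Even t), (F t + F (t + 1)) := by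
  rw [← Finset.sum_filter_add_sum_filter_not (Finset.range (T+1)) (fun s => Even s) F]
  have h1 : (Finset.range (T+1)).filter (fun s => Even s)
      = (Finset.range T).filter (fun t => Even t) := by
    ext s
    simp only [Finset.mem_filter, Finset.mem_range, Nat.lt_succ_iff]
    constructor
    · rintro ⟨hsT, hs⟩
      refine ⟨lt_of_le_of_ne hsT ?_, hs⟩
      rintro rfl
      exact (Nat.not_odd_iff_even.mpr hs) hT
    · exact fun h => ⟨h.1.le, h.2⟩
  have h2 : (Finset.range (T+1)).filter (fun s => ¬ Even s)
      = ((Finset.range T).filter (fun t => Even t)).image (· + 1) := by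
    ext s
    simp only [Finset.mem_filter, Finset.mem_range, Finset.mem_image, Nat.lt_succ_iff]
    constructor
    · rintro ⟨hsT, hs⟩
      have hs1 : 1 ≤ s := by
        rcases Nat.eq_zero_or_pos s with rfl | h
        · exact absurd Even.zero hs
        · exact h
      refine ⟨s - 1, ⟨by omega, ?_⟩, by omega⟩
      rcases Nat.even_or_odd s with h | h
      · exact absurd h hs
      · rcases h with ⟨k, hk⟩
        exact ⟨k, by omega⟩
    · rintro ⟨t, ⟨htT, ht⟩, rfl⟩
      exact ⟨by omega, by simpa [Nat.even_add_one] using ht⟩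
  rw [h1, h2, Finset.sum_image (fun a _ b _ h => by omega), ← Finset.sum_add_distrib]

variable {A Z : Type*} [Fintype A] [Fintype Z] [DecidableEq A] [DecidableEq Z]

def embL (T : ℕ) (d : Fin 2) (t : ℕ) :
    Wsp A Z →ₗ[ℂ] EuclideanSpace ℂ (Fin 2 × A × Z × Fin (T + 1)) where
  toFun := emb T d t
  map_add' x y := by
    ext p
    simp only [emb, PiLp.add_apply, PiLp.toLp_apply]
    split_ifs <;> simp [PiLp.add_apply]
  map_smul' r x := by
    ext p
    simp only [emb, PiLp.smul_apply, RingHom.id_apply, PiLp.toLp_apply]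
    split_ifs <;> simp [PiLp.smul_apply]

lemma emb_eq (T : ℕ) (d : Fin 2) (t : ℕ) (x : Wsp A Z) :
    emb T d t x = embL T d t x := rfl

lemma inner_emb_emb (T : ℕ) (d d' : Fin 2) (t t' : ℕ) (x y : Wsp A Z)
    (h : d ≠ d' ∨ t ≠ t') :
    (inner ℂ (emb T d t x) (emb T d' t' y) : ℂ) = 0 := by
  rw [PiLp.inner_apply]
  simp only [RCLike.inner_apply]
  apply Finset.sum_eq_zero
  intro p _
  by_cases h1 : p.1 = d ∧ (p.2.2.2 : ℕ) = t
  · by_cases h2 : p.1 = d' ∧ (p.2.2.2 : ℕ) = t'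
    · exfalso
      rcases h with h | h
      · exact h (h1.1 ▸ h2.1)
      · exact h (h1.2 ▸ h2.2)
    · simp [emb, h2]
  · simp [emb, h1]

lemma inner_emb_same (T : ℕ) (d : Fin 2) (t : ℕ) (ht : t < T + 1) (x y : Wsp A Z) :
    (inner ℂ (emb T d t x) (emb T d t y) : ℂ) = inner ℂ x y := by
  classical
  rw [PiLp.inner_apply, PiLp.inner_apply]
  simp only [RCLike.inner_apply']
  have hpt : ∀ p : Fin 2 × A × Z × Fin (T+1),
      (starRingEnd ℂ) (emb T d t x p) * emb T d t y p
        = if p.1 = d ∧ (p.2.2.2 : ℕ) = t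
            then (starRingEnd ℂ) (x (p.2.1, p.2.2.1)) * y (p.2.1, p.2.2.1) else 0 := by
    intro p
    simp only [emb, PiLp.toLp_apply]
    split_ifs <;> simp
  rw [Finset.sum_congr rfl (fun p _ => hpt p), Finset.sum_ite, Finset.sum_const_zero, add_zero]
  apply Finset.sum_nbij' (i := fun p : Fin 2 × A × Z × Fin (T+1) => (p.2.1, p.2.2.1))
    (j := fun az : A × Z => (d, az.1, az.2, (⟨t, ht⟩ : Fin (T+1))))
  · intro p _; exact Finset.mem_univ _
  · intro az _
    simp
  · rintro ⟨pd, pa, pz, pτ⟩ hp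
    simp only [Finset.mem_filter, Finset.mem_univ, true_and] at hp
    obtain ⟨hd, hτ⟩ := hp
    simp [hd, Fin.ext_iff, hτ]
  · intro az _; rfl
  · rintro ⟨pd, pa, pz, pτ⟩ hp; rfl

lemma norm_emb (T : ℕ) (d : Fin 2) (t : ℕ) (ht : t < T + 1) (x : Wsp A Z) :
    ‖emb T d t x‖ ^ 2 = ‖x‖ ^ 2 := by
  rw [norm_sq_eq_re_inner (𝕜 := ℂ), norm_sq_eq_re_inner (𝕜 := ℂ), inner_emb_same T d t ht]

lemma norm_sq_sum_emb (T : ℕ) (u v : ℕ → Wsp A Z) (S : Finset ℕ) (hS : ∀ s ∈ S, s < T + 1) :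
    ‖∑ t ∈ S, (emb T 0 t (u t) + emb T 1 t (v t))‖ ^ 2
      = ∑ t ∈ S, (‖u t‖ ^ 2 + ‖v t‖ ^ 2) := by
  classical
  induction S using Finset.induction_on with
  | empty => simp
  | @insert t0 S' ht0 ih =>
    rw [Finset.sum_insert ht0, Finset.sum_insert ht0, norm_add_sq (𝕜 := ℂ)]
    have horth : (inner ℂ (emb T 0 t0 (u t0) + emb T 1 t0 (v t0))
        (∑ t ∈ S', (emb T 0 t (u t) + emb T 1 t (v t))) : ℂ) = 0 := by
      rw [inner_sum]
      apply Finset.sum_eq_zero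
      intro t ht
      have hne : t0 ≠ t := fun h => ht0 (h ▸ ht)
      rw [inner_add_left, inner_add_right, inner_add_right,
        inner_emb_emb T 0 0 t0 t _ _ (Or.inr hne), inner_emb_emb T 0 1 t0 t _ _ (Or.inr hne),
        inner_emb_emb T 1 0 t0 t _ _ (Or.inr hne), inner_emb_emb T 1 1 t0 t _ _ (Or.inr hne)]
      ring
    have hn : ‖emb T 0 t0 (u t0) + emb T 1 t0 (v t0)‖ ^ 2 = ‖u t0‖ ^ 2 + ‖v t0‖ ^ 2 := by
      rw [norm_add_sq (𝕜 := ℂ), inner_emb_emb T 0 1 t0 t0 _ _ (Or.inl (by decide)),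
        norm_emb T 0 t0 (hS t0 (Finset.mem_insert_self _ _)),
        norm_emb T 1 t0 (hS t0 (Finset.mem_insert_self _ _))]
      simp
    rw [horth, hn, ih (fun s hs => hS s (Finset.mem_insert_of_mem hs))]
    simp


lemma trans_mem (T : ℕ) (layer : Z → ℕ) (α : ℕ → ℝ) (U : ℕ → Wsp A Z →L[ℂ] Wsp A Z)
    (c : A → ℂ) {d : Fin 2} (hd : d = 0 ∨ d = 1) {t : ℕ} (hte : Even t) (htT : t < T)
    (r : Wsp A Z) (hr : ∀ az : A × Z, layer az.2 ≤ t → r az = 0) :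
    (Real.sqrt (α t) : ℂ) • emb T d t r
      - (Real.sqrt (α (t + 1)) : ℂ) • emb T d (t + 1) (U (t + 1) r)
      ∈ Submodule.span ℂ (Psi0Set T layer α U c) := by
  classical
  have hgen : ∀ az : A × Z, t < layer az.2 →
      emb T d t ((Real.sqrt (α t) : ℂ) • EuclideanSpace.single az (1 : ℂ))
        - emb T d (t + 1)
            ((Real.sqrt (α (t + 1)) : ℂ) • U (t + 1) (EuclideanSpace.single az (1 : ℂ)))
        ∈ Psi0Set T layer α U c := by
    intro az hz
    rcases hd with rfl | rfl
    · exact Or.inl (Or.inl ⟨t, az.1, az.2, hte, htT, hz, rfl⟩)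
    · exact Or.inl (Or.inr ⟨t, az.1, az.2, hte, htT, hz, rfl⟩)
  have hrsum : r = ∑ az ∈ Finset.univ.filter (fun az : A × Z => t < layer az.2),
      r az • EuclideanSpace.single az (1 : ℂ) := by
    ext bz
    rw [euclid_sum_apply]
    simp only [PiLp.smul_apply, EuclideanSpace.single_apply, smul_eq_mul, mul_ite, mul_one,
      mul_zero]
    rw [Finset.sum_ite_eq (Finset.univ.filter (fun az : A × Z => t < layer az.2)) bz (fun az => r az)]
    by_cases h : t < layer bz.2
    · simp [h]
    · simp only [Finset.mem_filter, Finset.mem_univ, true_and, h, if_false]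
      exact hr bz (not_lt.mp h)
  have key : (Real.sqrt (α t) : ℂ) • emb T d t r
      - (Real.sqrt (α (t + 1)) : ℂ) • emb T d (t + 1) (U (t + 1) r)
      = ∑ az ∈ Finset.univ.filter (fun az : A × Z => t < layer az.2),
          r az • (emb T d t ((Real.sqrt (α t) : ℂ) • EuclideanSpace.single az (1 : ℂ))
            - emb T d (t + 1)
                ((Real.sqrt (α (t + 1)) : ℂ) • U (t + 1) (EuclideanSpace.single az (1 : ℂ)))) := by
    conv_lhs => rw [hrsum]
    simp only [emb_eq, map_sum, map_smul, ContinuousLinearMap.map_smul, Finset.smul_sum,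
      smul_sub, smul_smul, Finset.sum_sub_distrib]
    congr 1 <;> exact Finset.sum_congr rfl fun az _ => by rw [mul_comm]
  rw [key]
  exact Submodule.sum_mem _ fun az haz =>
    Submodule.smul_mem _ _ (Submodule.subset_span (hgen az (by simpa using haz)))

def fHalf0 (c : A → ℂ) (y : Wsp A Z) : Wsp A Z :=
  WithLp.toLp 2 fun az => ((1 - (starRingEnd ℂ) (c az.1)) / 2) * y az

def fHalf1 (c : A → ℂ) (y : Wsp A Z) : Wsp A Z :=
  WithLp.toLp 2 fun az => ((c az.1 - 1) / 2) * y az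

lemma fHalf_bound (c : A → ℂ) (hc : ∀ a, ‖c a‖ = 1) (g : A) (hcg : c g = 1) (y : Wsp A Z) :
    ‖fHalf0 c y‖ ^ 2 + ‖fHalf1 c y‖ ^ 2 ≤ 2 * ‖badPart g y‖ ^ 2 := by
  rw [euclid_norm_sq, euclid_norm_sq, euclid_norm_sq, ← Finset.sum_add_distrib, Finset.mul_sum]
  apply Finset.sum_le_sum
  intro az _
  show ‖fHalf0 c y az‖ ^ 2 + ‖fHalf1 c y az‖ ^ 2 ≤ 2 * ‖badPart g y az‖ ^ 2
  rcases eq_or_ne az.1 g with he | hne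
  · simp [fHalf0, fHalf1, badPart, he, hcg]
  · have hb : badPart g y az = y az := by simp [badPart, hne]
    have h2 : ‖(2 : ℂ)‖ = 2 := by norm_num
    have h0 : ‖(1 - (starRingEnd ℂ) (c az.1)) / 2‖ ≤ 1 := by
      rw [norm_div, h2]
      have : ‖1 - (starRingEnd ℂ) (c az.1)‖ ≤ 2 := by
        calc ‖1 - (starRingEnd ℂ) (c az.1)‖
            ≤ ‖(1 : ℂ)‖ + ‖(starRingEnd ℂ) (c az.1)‖ := norm_sub_le _ _
          _ = 2 := by rw [norm_one, RCLike.norm_conj, hc]; norm_num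
      linarith
    have h1 : ‖(c az.1 - 1) / 2‖ ≤ 1 := by
      rw [norm_div, h2]
      have : ‖c az.1 - 1‖ ≤ 2 := by
        calc ‖c az.1 - 1‖ ≤ ‖c az.1‖ + ‖(1 : ℂ)‖ := norm_sub_le _ _
          _ = 2 := by rw [norm_one, hc]; norm_num
      linarith
    rw [hb]
    show ‖((1 - (starRingEnd ℂ) (c az.1)) / 2) * y az‖ ^ 2
        + ‖((c az.1 - 1) / 2) * y az‖ ^ 2 ≤ 2 * ‖y az‖ ^ 2
    rw [norm_mul, norm_mul, mul_pow, mul_pow]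
    have h0sq : ‖(1 - (starRingEnd ℂ) (c az.1)) / 2‖ ^ 2 ≤ 1 :=
      pow_le_one₀ (norm_nonneg _) h0
    have h1sq : ‖(c az.1 - 1) / 2‖ ^ 2 ≤ 1 := pow_le_one₀ (norm_nonneg _) h1
    nlinarith [h0sq, h1sq, sq_nonneg ‖y az‖]


end Aux

/-- **Negative witness error bound.** In the variable-time subroutine model
(layers `1 ≤ layer z ≤ T`, unitaries `U_t` fixing `H_{t-1}` pointwise,
algorithm states `w t = U_t (Π_{≥t} w (t-1))`, `w 0 = ψ₀`, `α_0 = 1`, phases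
`c a` of unit modulus with `c g = 1` for the correct answer `g`, `T` odd),
the squared distance from the negative history state `w₋` to the span of the
even-time transition states `Ψ_0` is at most
`2 ∑_{t even, t < T} α_t · p̄(t) ε^t ≤ 2 E[α_T ε^T]`, where
`p̄(t) ε^t = ‖(I - Ξ_g) Π_t w^t‖²`. -/
theorem negative_history_distance_to_Psi0
    {A Z : Type*} [Fintype A] [Fintype Z] [DecidableEq A] [DecidableEq Z]
    (T : ℕ) (hTodd : Odd T)
    (layer : Z → ℕ) (hlayer : ∀ z, 1 ≤ layer z ∧ layer z ≤ T)
    (α : ℕ → ℝ) (hα : ∀ t, 0 < α t) (hα0 : α 0 = 1)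
    (U : ℕ → Wsp A Z →L[ℂ] Wsp A Z)
    (hU : ∀ t (x y : Wsp A Z), (inner ℂ (U t x) (U t y) : ℂ) = inner ℂ x y)
    (hUsurj : ∀ t, Function.Surjective (U t))
    (hUfix : ∀ t, 1 ≤ t → ∀ x : Wsp A Z,
      U t (layerProj layer (t - 1) x) = layerProj layer (t - 1) x)
    (g : A) (c : A → ℂ) (hc : ∀ a, ‖c a‖ = 1) (hcg : c g = 1)
    (ψ0 : Wsp A Z) (hψ0 : ‖ψ0‖ = 1)
    (w : ℕ → Wsp A Z) (hw0 : w 0 = ψ0)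
    (hw : ∀ t, 1 ≤ t →
      w t = U t (w (t - 1) - layerProj layer (t - 1) (w (t - 1)))) :
    ‖negHistory T α w -
        (Submodule.orthogonalProjectionOnto (Submodule.span ℂ (Psi0Set T layer α U c))
          (negHistory T α w) :
          EuclideanSpace ℂ (Fin 2 × A × Z × Fin (T + 1)))‖ ^ 2
      ≤ 2 * ∑ t ∈ (Finset.range T).filter (fun t => Even t),
          α t * ‖badPart g (layerSlice layer t (w t))‖ ^ 2
    ∧ 2 * ∑ t ∈ (Finset.range T).filter (fun t => Even t),
          α t * ‖badPart g (layerSlice layer t (w t))‖ ^ 2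
        ≤ 2 * ∑ t ∈ Finset.range (T + 1),
            α t * ‖badPart g (layerSlice layer t (w t))‖ ^ 2 := by
  classical
  have hterm_nonneg : ∀ t : ℕ, 0 ≤ α t * ‖badPart g (layerSlice layer t (w t))‖ ^ 2 :=
    fun t => mul_nonneg (hα t).le (by positivity)
  refine ⟨?_, mul_le_mul_of_nonneg_left
    (Finset.sum_le_sum_of_subset_of_nonneg
      ((Finset.filter_subset _ _).trans (Finset.range_subset_range.mpr (by omega)))
      (fun t _ _ => hterm_nonneg t)) (by norm_num)⟩
  have hwz : ∀ t, 1 ≤ t → ∀ az : A × Z, layer az.2 ≤ t - 1 → w t az = 0 := by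
    intro t ht az hlz
    have hsingle : layerProj layer (t-1) (EuclideanSpace.single az (1:ℂ))
        = EuclideanSpace.single az (1:ℂ) := by
      ext bz
      simp only [layerProj, EuclideanSpace.single_apply, PiLp.toLp_apply]
      rcases eq_or_ne bz az with rfl | hne
      · simp [hlz]
      · simp [hne]
    have hfix := hUfix t ht (EuclideanSpace.single az (1:ℂ))
    rw [hsingle] at hfix
    have hyz : (w (t-1) - layerProj layer (t-1) (w (t-1))) az = 0 := by
      simp only [PiLp.sub_apply, layerProj, PiLp.toLp_apply]
      rw [if_pos hlz, sub_self]
    have h1 : w t az = (inner ℂ (EuclideanSpace.single az (1:ℂ)) (w t) : ℂ) := by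
      rw [EuclideanSpace.inner_single_left]; simp
    rw [h1, hw t ht, ← hfix, hU, EuclideanSpace.inner_single_left]
    simp [hyz]
  have hps : ∀ t, layerProj layer t (w t) = layerSlice layer t (w t) := by
    intro t
    ext az
    simp only [layerProj, layerSlice, PiLp.toLp_apply]
    rcases eq_or_ne (layer az.2) t with he | hne
    · rw [if_pos he.le, if_pos he]
    · rw [if_neg hne]
      split_ifs with hle
      · have h1t : 1 ≤ t := le_trans (hlayer az.2).1 hle
        exact hwz t h1t az (by omega)
      · rfl
  have hcc : ∀ a : A, c a * (starRingEnd ℂ) (c a) = 1 := by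
    intro a
    rw [Complex.mul_conj]
    norm_cast
    rw [Complex.normSq_eq_norm_sq, hc a, one_pow]
  set ρ : EuclideanSpace ℂ (Fin 2 × A × Z × Fin (T + 1)) :=
    ∑ t ∈ (Finset.range T).filter (fun t => Even t),
      (emb T 0 t ((Real.sqrt (α t) : ℂ) • fHalf0 c (layerSlice layer t (w t)))
        + emb T 1 t ((Real.sqrt (α t) : ℂ) • fHalf1 c (layerSlice layer t (w t)))) with hρ
  have hmem : negHistory T α w - ρ ∈ Submodule.span ℂ (Psi0Set T layer α U c) := by
    have hneg : negHistory T α w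
        = ∑ t ∈ (Finset.range T).filter (fun t => Even t),
            (((Real.sqrt (α t) : ℂ) * (-1) ^ t) • (emb T 0 t (w t) - emb T 1 t (w t))
              + ((Real.sqrt (α (t+1)) : ℂ) * (-1) ^ (t+1)) •
                  (emb T 0 (t+1) (w (t+1)) - emb T 1 (t+1) (w (t+1)))) :=
      sum_range_odd_pair T hTodd _
    rw [hneg, hρ, ← Finset.sum_sub_distrib]
    apply Submodule.sum_mem
    intro t htS
    have htT : t < T := Finset.mem_range.mp (Finset.mem_filter.mp htS).1
    have hte : Even t := (Finset.mem_filter.mp htS).2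
    set xt := layerSlice layer t (w t) with hxt
    obtain ⟨v, hv⟩ : ∃ v, w t = v + xt := ⟨w t - xt, by abel⟩
    have hv' : v = w t - xt := by rw [hv]; abel
    have hr : ∀ az : A × Z, layer az.2 ≤ t → v az = 0 := by
      intro az haz
      have h1 : v az = w t az - xt az := by rw [hv']; rfl
      have hx_az : xt az = (if layer az.2 = t then w t az else 0) := by rw [hxt]; rfl
      rcases eq_or_ne (layer az.2) t with he | hne
      · rw [h1, hx_az, if_pos he, sub_self]
      · have h1t : 1 ≤ t := le_trans (hlayer az.2).1 haz
        rw [h1, hx_az, if_neg hne, hwz t h1t az (by omega), sub_zero]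
    have hw1 : w (t+1) = U (t+1) v := by
      rw [hw (t+1) (by omega), Nat.add_sub_cancel, hps t, ← hxt, ← hv']
    have hP1 := trans_mem T layer α U c (Or.inl rfl) hte htT v hr
    have hP2 := trans_mem T layer α U c (Or.inr rfl) hte htT v hr
    set sf : Finset (A × Z) := Finset.univ.filter (fun az : A × Z => layer az.2 = t) with hsf
    set μ : A × Z → ℂ := fun az => ((1 + (starRingEnd ℂ) (c az.1)) / 2) * xt az with hμ
    have hmem3 : (∑ az ∈ sf, μ az •
        ((Real.sqrt (α t) : ℂ) •
          (emb T 0 t (EuclideanSpace.single az (1 : ℂ))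
            - c az.1 • emb T 1 t (EuclideanSpace.single az (1 : ℂ)))))
        ∈ Submodule.span ℂ (Psi0Set T layer α U c) := by
      apply Submodule.sum_mem
      intro az haz
      have hlz : layer az.2 = t := by
        have h := Finset.mem_filter.mp (by rwa [hsf] at haz)
        exact h.2
      apply Submodule.smul_mem
      apply Submodule.subset_span
      exact Or.inr ⟨t, az.1, az.2, hte, by have := (hlayer az.2).1; omega, htT.le, hlz, rfl⟩
    have W1 : xt - fHalf0 c xt = ∑ az ∈ sf, μ az • EuclideanSpace.single az (1 : ℂ) := by
      ext bz
      have hL : (xt - fHalf0 c xt) bz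
          = xt bz - ((1 - (starRingEnd ℂ) (c bz.1)) / 2) * xt bz := rfl
      rw [hL, euclid_sum_apply]
      simp only [PiLp.smul_apply, EuclideanSpace.single_apply, smul_eq_mul, mul_ite, mul_one,
        mul_zero]
      rw [Finset.sum_ite_eq sf bz μ]
      by_cases hbz : layer bz.2 = t
      · rw [if_pos (by simp [hsf, hbz]), hμ]
        ring
      · have hx0 : xt bz = 0 := by rw [hxt]; simp [layerSlice, hbz]
        rw [if_neg (by simp [hsf, hbz]), hx0]
        simp [hμ, hx0]
    have W2 : xt + fHalf1 c xt
        = ∑ az ∈ sf, (μ az * c az.1) • EuclideanSpace.single az (1 : ℂ) := by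
      ext bz
      have hL : (xt + fHalf1 c xt) bz
          = xt bz + ((c bz.1 - 1) / 2) * xt bz := rfl
      rw [hL, euclid_sum_apply]
      simp only [PiLp.smul_apply, EuclideanSpace.single_apply, smul_eq_mul, mul_ite, mul_one,
        mul_zero]
      rw [Finset.sum_ite_eq sf bz (fun az => μ az * c az.1)]
      by_cases hbz : layer bz.2 = t
      · rw [if_pos (by simp [hsf, hbz]), hμ]
        linear_combination (- xt bz / 2) * hcc bz.1
      · have hx0 : xt bz = 0 := by rw [hxt]; simp [layerSlice, hbz]
        rw [if_neg (by simp [hsf, hbz]), hx0]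
        simp [hμ, hx0]
    have W1e : (∑ az ∈ sf, μ az • embL T 0 t (EuclideanSpace.single az (1 : ℂ)))
        = embL T 0 t xt - embL T 0 t (fHalf0 c xt) := by
      have h := congrArg (embL T 0 t) W1
      rw [map_sub, map_sum] at h
      simp only [map_smul] at h
      exact h.symm
    have W2e : (∑ az ∈ sf, (μ az * c az.1) • embL T 1 t (EuclideanSpace.single az (1 : ℂ)))
        = embL T 1 t xt + embL T 1 t (fHalf1 c xt) := by
      have h := congrArg (embL T 1 t) W2
      rw [map_add, map_sum] at h
      simp only [map_smul] at h
      exact h.symm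
    have hP3sum : (∑ az ∈ sf, μ az •
        ((Real.sqrt (α t) : ℂ) •
          (embL T 0 t (EuclideanSpace.single az (1 : ℂ))
            - c az.1 • embL T 1 t (EuclideanSpace.single az (1 : ℂ)))))
        = (Real.sqrt (α t) : ℂ) • (embL T 0 t xt - embL T 0 t (fHalf0 c xt))
          - (Real.sqrt (α t) : ℂ) • (embL T 1 t xt + embL T 1 t (fHalf1 c xt)) := by
      rw [← W1e, ← W2e, Finset.smul_sum, Finset.smul_sum, ← Finset.sum_sub_distrib]
      exact Finset.sum_congr rfl fun az _ => by module
    have hcomb := Submodule.add_mem _ (Submodule.sub_mem _ hP1 hP2) hmem3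
    convert hcomb using 1
    have hs0 : ((-1 : ℂ)) ^ t = 1 := hte.neg_one_pow
    have hs1 : ((-1 : ℂ)) ^ (t + 1) = -1 := by rw [pow_succ, hs0, one_mul]
    rw [hw1, hv, hs0, hs1, mul_one, mul_neg_one]
    simp only [emb_eq, map_add, map_smul, neg_smul]
    rw [hP3sum]
    module
  have hdist : ‖negHistory T α w -
      (Submodule.orthogonalProjectionOnto (Submodule.span ℂ (Psi0Set T layer α U c)) (negHistory T α w) :
        EuclideanSpace ℂ (Fin 2 × A × Z × Fin (T + 1)))‖ ≤ ‖ρ‖ := by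
    rw [← Submodule.starProjection_apply, Submodule.starProjection_minimal]
    have hbdd : BddBelow (Set.range fun v : (Submodule.span ℂ (Psi0Set T layer α U c)) =>
        ‖negHistory T α w - ↑v‖) := ⟨0, by rintro b ⟨v, rfl⟩; positivity⟩
    have hle := ciInf_le hbdd (⟨negHistory T α w - ρ, hmem⟩ :
      Submodule.span ℂ (Psi0Set T layer α U c))
    simpa using hle
  refine le_trans (pow_le_pow_left₀ (norm_nonneg _) hdist 2) ?_
  have hSlt : ∀ s ∈ (Finset.range T).filter (fun t => Even t), s < T + 1 := by
    intro s hs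
    have h := Finset.mem_range.mp (Finset.mem_filter.mp hs).1
    omega
  rw [hρ, norm_sq_sum_emb T
    (fun t => (Real.sqrt (α t) : ℂ) • fHalf0 c (layerSlice layer t (w t)))
    (fun t => (Real.sqrt (α t) : ℂ) • fHalf1 c (layerSlice layer t (w t))) _ hSlt]
  have hsm : ∀ (t : ℕ) (y : Wsp A Z), ‖(Real.sqrt (α t) : ℂ) • y‖ ^ 2 = α t * ‖y‖ ^ 2 := by
    intro t y
    rw [norm_smul, mul_pow, Complex.norm_real, Real.norm_eq_abs,
      abs_of_nonneg (Real.sqrt_nonneg _), Real.sq_sqrt (hα t).le]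
  rw [Finset.mul_sum]
  apply Finset.sum_le_sum
  intro t _
  rw [hsm, hsm, ← mul_add]
  calc α t * (‖fHalf0 c (layerSlice layer t (w t))‖ ^ 2
        + ‖fHalf1 c (layerSlice layer t (w t))‖ ^ 2)
      ≤ α t * (2 * ‖badPart g (layerSlice layer t (w t))‖ ^ 2) :=
        mul_le_mul_of_nonneg_left (fHalf_bound c hc g hcg _) (hα t).le
    _ = 2 * (α t * ‖badPart g (layerSlice layer t (w t))‖ ^ 2) := by ring

end
end
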